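/- arXiv:1212.2553 — 2 statements merged into one kernel-verified Lean document; each statement's English description precedes it below -/
import Mathlib

section
/- Non-uniqueness of spectral-sequence decompositions: In the ring of Laurent polynomials in two commuting variables t and q over ℤ, the element P(t,q) = 1 + q² + q⁴ + q⁶ + t·q¹² admits decompositions of the form P(t,q) = q^{-2s}(q⁻² + 1 + q²) + Σ_{k≥1} ζ_k(t,q)·(1 + t·q^{3k}), where the ζ_k are Laurent polynomials in t and q with nonnegative integer coefficients, all but finitely many zero, for two distinct values of the integer s: namely s = -1 (with ζ₂ = q⁶ and all other ζ_k = 0) and s = -2 (with ζ₄ = 1 and all other ζ_k = 0). In particular, the value of s in such a decomposition is not uniquely determined by P. -/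
/-- The ring of Laurent polynomials in two commuting variables `t` and `q` over `ℤ`,
realised as the monoid algebra of `ℤ × ℤ` over `ℤ`. -/
noncomputable abbrev LaurentTQ : Type := AddMonoidAlgebra ℤ (ℤ × ℤ)

/-- The monomial `tⁱ · qʲ`. -/
noncomputable def tq (i j : ℤ) : LaurentTQ := AddMonoidAlgebra.single (i, j) 1

/-- `ζ` has nonnegative integer coefficients. -/
def NonnegCoeffs (ζ : LaurentTQ) : Prop := ∀ m : ℤ × ℤ, 0 ≤ ζ.coeff m

/-- `IsSpectralDecomp P s ζ` says that
`P = q^{-2s}·(q⁻² + 1 + q²) + Σ_{k ≥ 1} ζ k · (1 + t·q^{3k})`,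
where each `ζ k` is a Laurent polynomial with nonnegative coefficients and all but
finitely many of the `ζ k` vanish (`ζ 0` is irrelevant and required to be `0`). -/
def IsSpectralDecomp (P : LaurentTQ) (s : ℤ) (ζ : ℕ → LaurentTQ) : Prop :=
  (∀ k : ℕ, NonnegCoeffs (ζ k)) ∧
  ζ 0 = 0 ∧
  {k : ℕ | ζ k ≠ 0}.Finite ∧
  P = tq 0 (-2 * s) * (tq 0 (-2) + 1 + tq 0 2) +
      ∑ᶠ k : ℕ, ζ k * (1 + tq 1 (3 * (k : ℤ)))

/-! Each decomposition has a single nonzero `ζ_k`, read off from the identities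
`1 + q² + q⁴ + q⁶ + t q¹² = q²(q⁻² + 1 + q²) + q⁶(1 + t q⁶) = q⁴(q⁻² + 1 + q²) + (1 + t q¹²)`. -/

lemma tq_mul_tq (i j a b : ℤ) : tq i j * tq a b = tq (i + a) (j + b) := by
  simp [tq, AddMonoidAlgebra.single_mul_single, Prod.mk_add_mk]

lemma tq_zero_zero : tq 0 0 = 1 := rfl

lemma nonnegCoeffs_tq (i j : ℤ) : NonnegCoeffs (tq i j) := by
  intro m
  simp only [tq, AddMonoidAlgebra.coeff_single, Finsupp.single_apply]
  split <;> norm_num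

lemma nonnegCoeffs_one : NonnegCoeffs 1 := nonnegCoeffs_tq 0 0

lemma nonnegCoeffs_zero : NonnegCoeffs 0 := fun _ => le_rfl

lemma isSpectralDecomp_single {P a : LaurentTQ} {s : ℤ} {k : ℕ} (hk : k ≠ 0)
    (ha : NonnegCoeffs a)
    (hP : P = tq 0 (-2 * s) * (tq 0 (-2) + 1 + tq 0 2) + a * (1 + tq 1 (3 * (k : ℤ)))) :
    IsSpectralDecomp P s (Pi.single k a) := by
  refine ⟨fun n => ?_, by simp [hk.symm], ?_, ?_⟩
  · rcases eq_or_ne n k with rfl | hn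
    · simpa using ha
    · simpa [Pi.single_eq_of_ne hn] using nonnegCoeffs_zero
  · exact (Set.finite_singleton k).subset Pi.support_single_subset
  · rwa [finsum_eq_single _ k fun n hn => by simp [Pi.single_eq_of_ne hn], Pi.single_eq_same]

/-- **Non-uniqueness of spectral-sequence decompositions.**
The Laurent polynomial `P(t,q) = 1 + q² + q⁴ + q⁶ + t·q¹²` admits decompositions of the
form `P = q^{-2s}(q⁻² + 1 + q²) + Σ_{k ≥ 1} ζ_k·(1 + t·q^{3k})` (with the `ζ_k` having
nonnegative coefficients, all but finitely many zero) for two distinct values of the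
integer `s`: namely `s = -1` (with `ζ₂ = q⁶` and all other `ζ_k = 0`) and `s = -2`
(with `ζ₄ = 1` and all other `ζ_k = 0`). In particular, `s` is not determined by `P`. -/
theorem spectral_decomposition_not_unique :
    ∃ ζ ζ' : ℕ → LaurentTQ,
      IsSpectralDecomp (1 + tq 0 2 + tq 0 4 + tq 0 6 + tq 1 12) (-1) ζ ∧
      IsSpectralDecomp (1 + tq 0 2 + tq 0 4 + tq 0 6 + tq 1 12) (-2) ζ' ∧
      ζ 2 = tq 0 6 ∧ (∀ k : ℕ, k ≠ 2 → ζ k = 0) ∧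
      ζ' 4 = 1 ∧ (∀ k : ℕ, k ≠ 4 → ζ' k = 0) ∧
      (-1 : ℤ) ≠ (-2 : ℤ) := by
  refine ⟨Pi.single 2 (tq 0 6), Pi.single 4 1, ?_, ?_, Pi.single_eq_same _ _,
    fun k hk => Pi.single_eq_of_ne hk _, Pi.single_eq_same _ _,
    fun k hk => Pi.single_eq_of_ne hk _, by norm_num⟩
  · refine isSpectralDecomp_single two_ne_zero (nonnegCoeffs_tq 0 6) ?_
    simp only [mul_add, mul_one, tq_mul_tq]
    norm_num [tq_zero_zero]
    abel
  · refine isSpectralDecomp_single four_ne_zero nonnegCoeffs_one ?_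
    simp only [mul_add, one_mul, mul_one, tq_mul_tq]
    norm_num [tq_zero_zero]
    abel
end

section
/- Uniqueness of the decomposition when only the first page contributes: Let s, s' be integers and let ζ, ζ' be Laurent polynomials in two commuting variables t and q over ℤ. If q^{-2s}(q⁻² + 1 + q²) + ζ(t,q)·(1 + t·q³) = q^{-2s'}(q⁻² + 1 + q²) + ζ'(t,q)·(1 + t·q³) in the ring of Laurent polynomials in t and q over ℤ, then s = s' and ζ = ζ'. -/
/-!
Specialising to `t = -1/8`, `q = 2` kills `1 + t q³` and sends `q⁻² + 1 + q²` to `21/4 ≠ 0`,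
so the two sides give `2^{-2s} = 2^{-2s'}`, whence `s = s'`. The equation then reduces to
`ζ (1 + t q³) = ζ' (1 + t q³)`, and `1 + t q³ ≠ 0` can be cancelled since the Laurent
polynomial ring is a domain.
-/

namespace LaurentTQ

variable {R : Type*} [CommRing R]

noncomputable def eval (u v : Rˣ) : LaurentTQ →ₐ[ℤ] R :=
  AddMonoidAlgebra.lift ℤ R (ℤ × ℤ)
    { toFun := fun p => ((u ^ p.toAdd.1 * v ^ p.toAdd.2 : Rˣ) : R)
      map_one' := by simp
      map_mul' := fun p p' => by
        simp only [toAdd_mul, Prod.fst_add, Prod.snd_add, zpow_add, ← Units.val_mul,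
          mul_mul_mul_comm] }

theorem eval_tq (u v : Rˣ) (i j : ℤ) : eval u v (tq i j) = ((u ^ i * v ^ j : Rˣ) : R) := by
  simp [eval, tq]

-- its value at `t = q = 1` is `2`
theorem one_add_tq_one_three_ne_zero : (1 + tq 1 3 : LaurentTQ) ≠ 0 := fun h => by
  simpa [eval_tq] using congrArg (eval (1 : ℤˣ) 1) h

end LaurentTQ

open LaurentTQ in
/-- **Uniqueness of the decomposition when only the first page contributes.**
If `s, s'` are integers and `ζ, ζ'` are Laurent polynomials in `t` and `q` over `ℤ` with
`q^{-2s}(q⁻² + 1 + q²) + ζ·(1 + t·q³) = q^{-2s'}(q⁻² + 1 + q²) + ζ'·(1 + t·q³)`,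
then `s = s'` and `ζ = ζ'`. -/
theorem spectral_decomposition_unique_first_page
    (s s' : ℤ) (ζ ζ' : LaurentTQ)
    (h : tq 0 (-2 * s) * (tq 0 (-2) + 1 + tq 0 2) + ζ * (1 + tq 1 3) =
         tq 0 (-2 * s') * (tq 0 (-2) + 1 + tq 0 2) + ζ' * (1 + tq 1 3)) :
    s = s' ∧ ζ = ζ' := by
  have hpow : (2 : ℚ) ^ (-2 * s) * (21 / 4) = 2 ^ (-2 * s') * (21 / 4) := by
    have := congrArg (eval (Units.mk0 (-1 / 8 : ℚ) (by norm_num)) (Units.mk0 2 two_ne_zero)) h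
    norm_num [eval_tq] at this
    simpa using this
  have hs : s = s' := by
    have := zpow_right_injective₀ (by norm_num) (by norm_num) (mul_right_cancel₀ (by norm_num) hpow)
    omega
  subst hs
  exact ⟨rfl, mul_right_cancel₀ one_add_tq_one_three_ne_zero (add_left_cancel h)⟩
end
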